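/- The number of balanced perfect matchings in the complete r-partite graph K_{r×(r-1)m} (r classes each of size (r-1)m) equals (((r-1)m)! / (m!)^{r-1})^r · (m!)^{C(r,2)}. -/

import Mathlib

open Nat SimpleGraph

/-- The number of edges of a subgraph `M` of a graph on a sigma type joining
class `i` to class `j` (for `i ≠ j`, each edge counted once as an ordered pair). -/
noncomputable def crossCount {ι : Type} {β : ι → Type}
    {G : SimpleGraph (Σ i, β i)} (M : G.Subgraph) (i j : ι) : ℕ :=
  {p : (Σ i, β i) × (Σ i, β i) | p.1.1 = i ∧ p.2.1 = j ∧ M.Adj p.1 p.2}.ncard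

/-- The number of balanced perfect matchings (perfect matchings with exactly `m`
edges between each pair of distinct classes) of a graph on a sigma type. -/
noncomputable def bpmCount {ι : Type} {β : ι → Type}
    (G : SimpleGraph (Σ i, β i)) (m : ℕ) : ℕ :=
  {M : G.Subgraph | M.IsPerfectMatching ∧
    ∀ i j : ι, i ≠ j → crossCount M i j = m}.ncard

attribute [local instance] Classical.propDecidable


/-- Orderings of fibers of `f` turn `f` into an equivalence `α ≃ β × Fin m`. -/
noncomputable def fiberEquiv {α β : Type} {m : ℕ}
    (x : Σ f : {f : α → β // ∀ b, Nat.card {x : α // f x = b} = m},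
      ∀ b : β, Fin m ≃ {a : α // f.1 a = b}) : α ≃ β × Fin m where
  toFun a := (x.1.1 a, (x.2 (x.1.1 a)).symm ⟨a, rfl⟩)
  invFun p := (x.2 p.1 p.2).1
  left_inv a := by simp
  right_inv := by
    obtain ⟨⟨f, hf⟩, o⟩ := x
    have key : ∀ (b : β) (z : {a : α // f a = b}),
        (o (f z.1)).symm ⟨z.1, rfl⟩ = (o b).symm z := by
      rintro b ⟨z, rfl⟩
      rfl
    rintro ⟨b, t⟩
    have h1 : f (o b t).1 = b := (o b t).2
    refine Prod.ext h1 ?_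
    simp only []
    rw [key b (o b t)]
    simp


noncomputable def fiberOrder {α β : Type} {m : ℕ} (e : α ≃ β × Fin m) (b : β) :
    Fin m ≃ {a : α // (e a).1 = b} where
  toFun t := ⟨e.symm (b, t), by simp⟩
  invFun z := (e z.1).2
  left_inv t := by simp
  right_inv z := by
    ext
    have : (e z.1).1 = b := z.2
    simp [← this]

noncomputable def fiberSigmaEquiv (α β : Type) (m : ℕ) :
    (Σ f : {f : α → β // ∀ b, Nat.card {x : α // f x = b} = m},
      ∀ b : β, Fin m ≃ {a : α // f.1 a = b}) ≃ (α ≃ β × Fin m) where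
  toFun := fiberEquiv
  invFun e :=
    ⟨⟨fun a => (e a).1, fun b =>
        Nat.card_eq_of_equiv_fin ((fiberOrder e b).symm)⟩, fiberOrder e⟩
  left_inv := by
    rintro ⟨⟨f, hf⟩, o⟩
    have h1 : (fun a => (fiberEquiv ⟨⟨f, hf⟩, o⟩ a).1) = f := rfl
    refine Sigma.ext rfl (heq_of_eq ?_)
    funext b
    refine Equiv.ext fun t => ?_
    refine Subtype.ext ?_
    show ((fiberEquiv ⟨⟨f, hf⟩, o⟩).symm (b, t) : α) = (o b t).1
    rfl
  right_inv e := by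
    refine Equiv.ext fun a => ?_
    show ((e a).1, (fiberOrder e ((e a).1)).symm ⟨a, rfl⟩) = e a
    have key : ∀ (b : β) (z : {a : α // (e a).1 = b}),
        (fiberOrder e ((e z.1).1)).symm ⟨z.1, rfl⟩ = (fiberOrder e b).symm z := by
      rintro b ⟨z, rfl⟩; rfl
    rw [key ((e a).1) ⟨a, rfl⟩]
    show ((e a).1, (e a).2) = e a
    rfl

lemma countA (m : ℕ) (α β : Type) [Fintype α] [Fintype β]
    (h : Fintype.card α = Fintype.card β * m) :
    Nat.card {f : α → β // ∀ b, Nat.card {x : α // f x = b} = m} * (m !) ^ (Fintype.card β)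
      = (Fintype.card α)! := by
  have hcard := Nat.card_congr (fiberSigmaEquiv α β m)
  have h2 : Nat.card (α ≃ β × Fin m) = (Fintype.card α)! := by
    rw [Nat.card_eq_fintype_card,
      Fintype.card_equiv (Fintype.equivOfCardEq (by simp [h]))]
  rw [← h2, ← hcard]
  conv_rhs => rw [Nat.card_eq_fintype_card]
  rw [Fintype.card_sigma]
  symm
  have hfib : ∀ (f : {f : α → β // ∀ b, Nat.card {x : α // f x = b} = m}) (b : β),
      Fintype.card (Fin m ≃ {a : α // f.1 a = b}) = m ! := by
    intro f b
    rw [Fintype.card_equiv (Fintype.equivOfCardEq (by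
      rw [Fintype.card_fin, ← Nat.card_eq_fintype_card, f.2 b]))]
    simp
  calc (∑ f : {f : α → β // ∀ b, Nat.card {x : α // f x = b} = m},
        Fintype.card (∀ b : β, Fin m ≃ {a : α // f.1 a = b}))
      = ∑ f : {f : α → β // ∀ b, Nat.card {x : α // f x = b} = m}, (m !) ^ (Fintype.card β) := by
        refine Finset.sum_congr rfl fun f _ => ?_
        rw [Fintype.card_pi]
        simp [hfib f]
    _ = Nat.card {f : α → β // ∀ b, Nat.card {x : α // f x = b} = m} * (m !) ^ (Fintype.card β) := by
        rw [Finset.sum_const, Finset.card_univ, ← Nat.card_eq_fintype_card, smul_eq_mul]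

noncomputable def classEquiv {n r : ℕ} {m : ℕ} (i : Fin r) :
    {ci : Fin n → Fin r // (∀ x, ci x ≠ i) ∧ ∀ j, j ≠ i → Nat.card {x : Fin n // ci x = j} = m}
      ≃ {g : Fin n → {j : Fin r // j ≠ i} // ∀ b, Nat.card {x : Fin n // g x = b} = m} where
  toFun c := ⟨fun x => ⟨c.1 x, c.2.1 x⟩, fun b =>
    (Nat.card_congr (Equiv.subtypeEquivRight fun x => by
      simp [Subtype.ext_iff])).trans (c.2.2 b.1 b.2)⟩
  invFun g := ⟨fun x => (g.1 x).1, ⟨fun x => (g.1 x).2, fun j hj =>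
    (Nat.card_congr (Equiv.subtypeEquivRight fun x => by
      simp [Subtype.ext_iff])).trans (g.2 ⟨j, hj⟩)⟩⟩
  left_inv c := rfl
  right_inv g := by
    refine Subtype.ext (funext fun x => Subtype.ext rfl)

lemma card_ne_fin (r : ℕ) (i : Fin r) : Fintype.card {j : Fin r // j ≠ i} = r - 1 := by
  rw [Fintype.card_subtype_compl]
  simp

lemma classCount (r m : ℕ) (i : Fin r) :
    Nat.card {ci : Fin ((r-1)*m) → Fin r //
        (∀ x, ci x ≠ i) ∧ ∀ j, j ≠ i → Nat.card {x : Fin ((r-1)*m) // ci x = j} = m}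
      * (m !) ^ (r - 1) = ((r-1)*m)! := by
  have := countA m (Fin ((r-1)*m)) {j : Fin r // j ≠ i}
    (by rw [Fintype.card_fin, card_ne_fin])
  rw [Nat.card_congr (classEquiv i), ← card_ne_fin r i] at *
  rw [this, Fintype.card_fin]

noncomputable def ltPairsEquiv (r : ℕ) :
    {q : Fin r × Fin r // q.1 < q.2} ≃ Σ j : Fin r, Fin j.1 where
  toFun q := ⟨q.1.2, ⟨q.1.1.1, q.2⟩⟩
  invFun x := ⟨(⟨x.2.1, x.2.2.trans x.1.2⟩, x.1), x.2.2⟩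
  left_inv q := rfl
  right_inv x := rfl

lemma card_pairs (r : ℕ) : Nat.card {q : Fin r × Fin r // q.1 < q.2} = r.choose 2 := by
  rw [Nat.card_congr (ltPairsEquiv r), Nat.card_eq_fintype_card, Fintype.card_sigma]
  simp only [Fintype.card_fin]
  rw [Fin.sum_univ_eq_sum_range (fun i => i) r, Finset.sum_range_id, Nat.choose_two_right]


section Graph
variable {r n : ℕ}

abbrev Vt (r n : ℕ) := Σ _ : Fin r, Fin n

abbrev Gg (r n : ℕ) : SimpleGraph (Vt r n) :=
  completeMultipartiteGraph (fun _ : Fin r => Fin n)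

def matchSubgraph (f : Vt r n → Vt r n) (h1 : ∀ v, (f v).1 ≠ v.1) : (Gg r n).Subgraph where
  verts := Set.univ
  Adj u v := f u = v ∨ f v = u
  adj_sub := by
    rintro u v (rfl | rfl)
    · exact (h1 u).symm
    · exact h1 v
  edge_vert := fun _ => Set.mem_univ _
  symm := ⟨fun u v h => h.symm⟩

lemma matchSubgraph_isPM (f : Vt r n → Vt r n) (h1 : ∀ v, (f v).1 ≠ v.1)
    (h2 : Function.Involutive f) : (matchSubgraph f h1).IsPerfectMatching := by
  rw [Subgraph.isPerfectMatching_iff]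
  intro v
  refine ⟨f v, Or.inl rfl, ?_⟩
  rintro w (rfl | rfl)
  · rfl
  · exact (h2 w).symm

lemma matchSubgraph_injective :
    Function.Injective (fun f : {f : Vt r n → Vt r n //
        (∀ v, (f v).1 ≠ v.1) ∧ Function.Involutive f} =>
      (⟨matchSubgraph f.1 f.2.1, matchSubgraph_isPM f.1 f.2.1 f.2.2⟩ :
        {M : (Gg r n).Subgraph // M.IsPerfectMatching})) := by
  rintro ⟨f, hf⟩ ⟨g, hg⟩ h
  simp only [Subtype.mk.injEq] at h ⊢
  funext v
  have : (matchSubgraph f hf.1).Adj v (f v) := Or.inl rfl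
  rw [h] at this
  rcases this with h' | h'
  · exact h'.symm
  · calc f v = g (g (f v)) := (hg.2 _).symm
      _ = g v := by rw [h']

lemma matchSubgraph_surjective :
    Function.Surjective (fun f : {f : Vt r n → Vt r n //
        (∀ v, (f v).1 ≠ v.1) ∧ Function.Involutive f} =>
      (⟨matchSubgraph f.1 f.2.1, matchSubgraph_isPM f.1 f.2.1 f.2.2⟩ :
        {M : (Gg r n).Subgraph // M.IsPerfectMatching})) := by
  rintro ⟨M, hM⟩
  have hu := Subgraph.isPerfectMatching_iff.mp hM
  choose f hfadj hfuniq using hu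
  have h1 : ∀ v, (f v).1 ≠ v.1 := fun v => (Ne.symm (M.adj_sub (hfadj v)))
  have h2 : Function.Involutive f := by
    intro v
    exact (hfuniq (f v) v ((hfadj v).symm)).symm
  refine ⟨⟨f, h1, h2⟩, ?_⟩
  simp only [Subtype.mk.injEq]
  refine Subgraph.ext ?_ ?_
  · exact (hM.2.verts_eq_univ).symm
  · ext u v
    constructor
    · rintro (rfl | rfl)
      · exact hfadj u
      · exact (hfadj v).symm
    · intro h
      exact Or.inl ((hfuniq u v h).symm)
end Graph

section Graph2
variable {r n : ℕ}

lemma sigma_eta' (v : Vt r n) (i : Fin r) (h : v.1 = i) : (⟨i, v.2⟩ : Vt r n) = v := by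
  subst h; rfl

lemma crossCount_matchSubgraph (f : Vt r n → Vt r n) (h1 : ∀ v, (f v).1 ≠ v.1)
    (h2 : Function.Involutive f) (i j : Fin r) :
    crossCount (matchSubgraph f h1) i j = Nat.card {x : Fin n // (f ⟨i, x⟩).1 = j} := by
  rw [crossCount, ← Nat.card_coe_set_eq]
  have hadj : ∀ u v : Vt r n, (matchSubgraph f h1).Adj u v → f u = v := by
    rintro u v (rfl | rfl)
    · rfl
    · exact h2 v
  refine Nat.card_congr (Equiv.trans ?_ (?_ :
    {v : Vt r n // v.1 = i ∧ (f v).1 = j} ≃ {x : Fin n // (f ⟨i, x⟩).1 = j}))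
  · refine ⟨fun q => ⟨q.1.1, q.2.1, ?_⟩, fun v => ⟨(v.1, f v.1), ⟨v.2.1, v.2.2, Or.inl rfl⟩⟩,
      ?_, fun v => rfl⟩
    · rw [hadj _ _ q.2.2.2]; exact q.2.2.1
    · rintro ⟨⟨u, v⟩, h⟩
      refine Subtype.ext (Prod.ext rfl ?_)
      exact hadj _ _ h.2.2
  · refine ⟨fun v => ⟨v.1.2, ?_⟩, fun x => ⟨⟨i, x.1⟩, rfl, x.2⟩, ?_, fun x => Subtype.ext rfl⟩
    · rw [sigma_eta' v.1 i v.2.1]; exact v.2.2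
    · intro v
      exact Subtype.ext (sigma_eta' v.1 i v.2.1)

noncomputable def pmEquiv (r n : ℕ) : {f : Vt r n → Vt r n //
      (∀ v, (f v).1 ≠ v.1) ∧ Function.Involutive f}
    ≃ {M : (Gg r n).Subgraph // M.IsPerfectMatching} :=
  Equiv.ofBijective _ ⟨matchSubgraph_injective, matchSubgraph_surjective⟩

noncomputable def bpmEquivF (r n m : ℕ) :
    {M : (Gg r n).Subgraph // M.IsPerfectMatching ∧
        ∀ i j : Fin r, i ≠ j → crossCount M i j = m}
    ≃ {f : Vt r n → Vt r n // ((∀ v, (f v).1 ≠ v.1) ∧ Function.Involutive f) ∧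
        ∀ i j : Fin r, i ≠ j → Nat.card {x : Fin n // (f ⟨i, x⟩).1 = j} = m} :=
  calc {M : (Gg r n).Subgraph // M.IsPerfectMatching ∧
        ∀ i j : Fin r, i ≠ j → crossCount M i j = m}
      ≃ {x : {M : (Gg r n).Subgraph // M.IsPerfectMatching} //
          ∀ i j : Fin r, i ≠ j → crossCount x.1 i j = m} :=
        ⟨fun M => ⟨⟨M.1, M.2.1⟩, M.2.2⟩, fun x => ⟨x.1.1, x.1.2, x.2⟩,
          fun M => rfl, fun x => rfl⟩
    _ ≃ {y : {f : Vt r n → Vt r n // (∀ v, (f v).1 ≠ v.1) ∧ Function.Involutive f} //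
          ∀ i j : Fin r, i ≠ j → Nat.card {x : Fin n // (y.1 ⟨i, x⟩).1 = j} = m} :=
        (Equiv.subtypeEquiv (pmEquiv r n) (fun y => by
          constructor
          · intro h i j hij
            show crossCount (matchSubgraph y.1 y.2.1) i j = m
            rw [crossCount_matchSubgraph y.1 y.2.1 y.2.2 i j]
            exact h i j hij
          · intro h i j hij
            have h' : crossCount (matchSubgraph y.1 y.2.1) i j = m := h i j hij
            rw [crossCount_matchSubgraph y.1 y.2.1 y.2.2 i j] at h'
            exact h')).symm
    _ ≃ _ := ⟨fun y => ⟨y.1.1, y.1.2, y.2⟩, fun f => ⟨⟨f.1, f.2.1⟩, f.2.2⟩,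
          fun y => rfl, fun f => rfl⟩
end Graph2

section Decomp
variable {r n m : ℕ}

abbrev Cc (r n m : ℕ) := {c : Fin r → Fin n → Fin r //
  ∀ i, (∀ x, c i x ≠ i) ∧ ∀ j, j ≠ i → Nat.card {x : Fin n // c i x = j} = m}

abbrev Pairs (r : ℕ) := {q : Fin r × Fin r // q.1 < q.2}

abbrev Tt (r n m : ℕ) := Σ c : Cc r n m, ∀ p : Pairs r,
  ({x : Fin n // c.1 p.1.1 x = p.1.2} ≃ {x : Fin n // c.1 p.1.2 x = p.1.1})

def Bfun (c : Cc r n m) (β : ∀ p : Pairs r,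
      ({x : Fin n // c.1 p.1.1 x = p.1.2} ≃ {x : Fin n // c.1 p.1.2 x = p.1.1}))
    (i j : Fin r) (hij : i ≠ j) :
    {x : Fin n // c.1 i x = j} ≃ {x : Fin n // c.1 j x = i} :=
  if h : i < j then β ⟨(i, j), h⟩
  else (β ⟨(j, i), lt_of_le_of_ne (not_lt.1 h) hij.symm⟩).symm

lemma Bfun_symm (c : Cc r n m) (β : ∀ p : Pairs r,
      ({x : Fin n // c.1 p.1.1 x = p.1.2} ≃ {x : Fin n // c.1 p.1.2 x = p.1.1}))
    (i j : Fin r) (hij : i ≠ j) (z : {x : Fin n // c.1 i x = j}) :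
    Bfun c β j i hij.symm (Bfun c β i j hij z) = z := by
  unfold Bfun
  rcases lt_or_gt_of_ne hij with h | h
  · rw [dif_pos h, dif_neg (asymm h)]
    exact Equiv.symm_apply_apply _ _
  · rw [dif_neg (asymm h), dif_pos h]
    exact Equiv.apply_symm_apply _ _

def invf (c : Cc r n m) (β : ∀ p : Pairs r,
      ({x : Fin n // c.1 p.1.1 x = p.1.2} ≃ {x : Fin n // c.1 p.1.2 x = p.1.1})) :
    Vt r n → Vt r n := fun v =>
  ⟨c.1 v.1 v.2, (Bfun c β v.1 (c.1 v.1 v.2) (Ne.symm ((c.2 v.1).1 v.2)) ⟨v.2, rfl⟩).1⟩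

lemma invf_eq (c : Cc r n m) (β : ∀ p : Pairs r,
      ({x : Fin n // c.1 p.1.1 x = p.1.2} ≃ {x : Fin n // c.1 p.1.2 x = p.1.1}))
    (i j : Fin r) (hij : i ≠ j) (x : Fin n) (hx : c.1 i x = j) :
    invf c β ⟨i, x⟩ = ⟨j, (Bfun c β i j hij ⟨x, hx⟩).1⟩ := by
  subst hx; rfl

lemma invf_invol (c : Cc r n m) (β : ∀ p : Pairs r,
      ({x : Fin n // c.1 p.1.1 x = p.1.2} ≃ {x : Fin n // c.1 p.1.2 x = p.1.1})) :
    Function.Involutive (invf c β) := by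
  rintro ⟨i, x⟩
  have hij : i ≠ c.1 i x := Ne.symm ((c.2 i).1 x)
  set z := Bfun c β i (c.1 i x) hij ⟨x, rfl⟩ with hz
  have h1 : invf c β ⟨i, x⟩ = ⟨c.1 i x, z.1⟩ := rfl
  rw [h1, invf_eq c β (c.1 i x) i hij.symm z.1 z.2]
  have h2 : Bfun c β (c.1 i x) i hij.symm z = ⟨x, rfl⟩ := Bfun_symm c β i (c.1 i x) hij _
  exact congrArg (Sigma.mk i) (congrArg Subtype.val h2)

def cOf (f : Vt r n → Vt r n)
    (hf : ((∀ v, (f v).1 ≠ v.1) ∧ Function.Involutive f) ∧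
      ∀ i j : Fin r, i ≠ j → Nat.card {x : Fin n // (f ⟨i, x⟩).1 = j} = m) : Cc r n m :=
  ⟨fun i x => (f ⟨i, x⟩).1, fun i =>
    ⟨fun x => hf.1.1 ⟨i, x⟩, fun j hj => hf.2 i j hj.symm⟩⟩

def βOf (f : Vt r n → Vt r n)
    (hf : ((∀ v, (f v).1 ≠ v.1) ∧ Function.Involutive f) ∧
      ∀ i j : Fin r, i ≠ j → Nat.card {x : Fin n // (f ⟨i, x⟩).1 = j} = m)
    (p : Pairs r) :
    {x : Fin n // (cOf f hf).1 p.1.1 x = p.1.2} ≃ {x : Fin n // (cOf f hf).1 p.1.2 x = p.1.1} where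
  toFun z := ⟨(f ⟨p.1.1, z.1⟩).2, by
    show (f ⟨p.1.2, (f ⟨p.1.1, z.1⟩).2⟩).1 = p.1.1
    rw [sigma_eta' (f ⟨p.1.1, z.1⟩) p.1.2 z.2, hf.1.2 ⟨p.1.1, z.1⟩]⟩
  invFun z := ⟨(f ⟨p.1.2, z.1⟩).2, by
    show (f ⟨p.1.1, (f ⟨p.1.2, z.1⟩).2⟩).1 = p.1.2
    rw [sigma_eta' (f ⟨p.1.2, z.1⟩) p.1.1 z.2, hf.1.2 ⟨p.1.2, z.1⟩]⟩
  left_inv z := by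
    refine Subtype.ext ?_
    show (f ⟨p.1.2, (f ⟨p.1.1, z.1⟩).2⟩).2 = z.1
    rw [sigma_eta' (f ⟨p.1.1, z.1⟩) p.1.2 z.2, hf.1.2 ⟨p.1.1, z.1⟩]
  right_inv z := by
    refine Subtype.ext ?_
    show (f ⟨p.1.1, (f ⟨p.1.2, z.1⟩).2⟩).2 = z.1
    rw [sigma_eta' (f ⟨p.1.2, z.1⟩) p.1.1 z.2, hf.1.2 ⟨p.1.2, z.1⟩]

lemma Bfun_βOf_val (f : Vt r n → Vt r n)
    (hf : ((∀ v, (f v).1 ≠ v.1) ∧ Function.Involutive f) ∧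
      ∀ i j : Fin r, i ≠ j → Nat.card {x : Fin n // (f ⟨i, x⟩).1 = j} = m)
    (i j : Fin r) (hij : i ≠ j)
    (z : {x : Fin n // (cOf f hf).1 i x = j}) :
    (Bfun (cOf f hf) (βOf f hf) i j hij z).1 = (f ⟨i, z.1⟩).2 := by
  unfold Bfun
  split <;> rfl

noncomputable def decompEquiv (r n m : ℕ) :
    {f : Vt r n → Vt r n // ((∀ v, (f v).1 ≠ v.1) ∧ Function.Involutive f) ∧
        ∀ i j : Fin r, i ≠ j → Nat.card {x : Fin n // (f ⟨i, x⟩).1 = j} = m}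
      ≃ Tt r n m where
  toFun F := ⟨cOf F.1 F.2, βOf F.1 F.2⟩
  invFun T := ⟨invf T.1 T.2,
    ⟨⟨fun v => (T.1.2 v.1).1 v.2, invf_invol T.1 T.2⟩,
      fun i j hij => (T.1.2 i).2 j hij.symm⟩⟩
  left_inv F := by
    obtain ⟨f, hf⟩ := F
    refine Subtype.ext (funext ?_)
    rintro ⟨i, x⟩
    show invf (cOf f hf) (βOf f hf) ⟨i, x⟩ = f ⟨i, x⟩
    refine Eq.trans ?_ (Sigma.eta (f ⟨i, x⟩))
    exact congrArg (Sigma.mk ((f ⟨i, x⟩).1))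
      (Bfun_βOf_val f hf i _ (Ne.symm (((cOf f hf).2 i).1 x)) ⟨x, rfl⟩)
  right_inv T := by
    obtain ⟨c, β⟩ := T
    refine Sigma.ext rfl (heq_of_eq ?_)
    funext p
    refine Equiv.ext fun z => ?_
    refine Subtype.ext ?_
    obtain ⟨⟨i, j⟩, hp⟩ := p
    obtain ⟨x, hx⟩ := z
    show (invf c β ⟨i, x⟩).2 = _
    rw [invf_eq c β i j hp.ne x hx]
    show (Bfun c β i j hp.ne ⟨x, hx⟩).1 = _
    unfold Bfun
    rw [dif_pos hp]
    rfl
end Decomp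

lemma card_Pairs (r : ℕ) : Nat.card (Pairs r) = r.choose 2 := card_pairs r

lemma card_Tt (r n m : ℕ) : Nat.card (Tt r n m) = Nat.card (Cc r n m) * (m !) ^ (r.choose 2) := by
  rw [Nat.card_eq_fintype_card, Fintype.card_sigma]
  have hfac : ∀ (c : Cc r n m) (p : Pairs r),
      Fintype.card ({x : Fin n // c.1 p.1.1 x = p.1.2} ≃ {x : Fin n // c.1 p.1.2 x = p.1.1})
        = m ! := by
    intro c p
    have h1 : Fintype.card {x : Fin n // c.1 p.1.1 x = p.1.2} = m := by
      rw [← Nat.card_eq_fintype_card]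
      exact (c.2 p.1.1).2 p.1.2 p.2.ne'
    have h2 : Fintype.card {x : Fin n // c.1 p.1.2 x = p.1.1} = m := by
      rw [← Nat.card_eq_fintype_card]
      exact (c.2 p.1.2).2 p.1.1 p.2.ne
    rw [Fintype.card_equiv (Fintype.equivOfCardEq (h1.trans h2.symm)), h1]
  calc (∑ c : Cc r n m, Fintype.card (∀ p : Pairs r,
        ({x : Fin n // c.1 p.1.1 x = p.1.2} ≃ {x : Fin n // c.1 p.1.2 x = p.1.1})))
      = ∑ _c : Cc r n m, (m !) ^ (r.choose 2) := by
        refine Finset.sum_congr rfl fun c _ => ?_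
        rw [Fintype.card_pi]
        simp only [hfac c]
        rw [Finset.prod_const, Finset.card_univ, ← Nat.card_eq_fintype_card, card_Pairs]
    _ = Nat.card (Cc r n m) * (m !) ^ (r.choose 2) := by
        rw [Finset.sum_const, Finset.card_univ, ← Nat.card_eq_fintype_card, smul_eq_mul]

lemma card_Cc (r n m : ℕ) : Nat.card (Cc r n m) = ∏ i : Fin r,
    Nat.card {ci : Fin n → Fin r //
      (∀ x, ci x ≠ i) ∧ ∀ j, j ≠ i → Nat.card {x : Fin n // ci x = j} = m} := by
  rw [Nat.card_congr (Equiv.subtypePiEquivPi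
    (p := fun (i : Fin r) (ci : Fin n → Fin r) =>
      (∀ x, ci x ≠ i) ∧ ∀ j, j ≠ i → Nat.card {x : Fin n // ci x = j} = m)), Nat.card_pi]

/-- The complete `r`-partite graph with classes of size `(r-1)m` has exactly
`(((r-1)m)! / (m!)^{r-1})^r * (m!)^{C(r,2)}` balanced perfect matchings. -/
theorem stmt_12 (r m : ℕ) (hr : 2 ≤ r) :
    (bpmCount (completeMultipartiteGraph (fun _ : Fin r => Fin ((r - 1) * m))) m : ℝ) =
      ((((r - 1) * m)! : ℝ) / ((m ! : ℝ)) ^ (r - 1)) ^ r * ((m ! : ℝ)) ^ (r.choose 2) := by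
  have hb : bpmCount (completeMultipartiteGraph (fun _ : Fin r => Fin ((r - 1) * m))) m
      = Nat.card (Tt r ((r - 1) * m) m) := by
    rw [bpmCount, ← Nat.card_coe_set_eq]
    exact Nat.card_congr ((bpmEquivF r ((r - 1) * m) m).trans (decompEquiv r ((r - 1) * m) m))
  rw [hb, card_Tt, card_Cc]
  have hm : (0:ℝ) < (m ! : ℝ) := by exact_mod_cast Nat.factorial_pos m
  have hCi : ∀ i : Fin r, ((Nat.card {ci : Fin ((r - 1) * m) → Fin r //
      (∀ x, ci x ≠ i) ∧ ∀ j, j ≠ i →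
        Nat.card {x : Fin ((r - 1) * m) // ci x = j} = m} : ℕ) : ℝ)
      = (((r - 1) * m)! : ℝ) / (m ! : ℝ) ^ (r - 1) := by
    intro i
    have h := classCount r m i
    have h2 : ((Nat.card {ci : Fin ((r - 1) * m) → Fin r //
        (∀ x, ci x ≠ i) ∧ ∀ j, j ≠ i →
          Nat.card {x : Fin ((r - 1) * m) // ci x = j} = m} : ℕ) : ℝ) * (m ! : ℝ) ^ (r - 1)
        = (((r - 1) * m)! : ℝ) := by exact_mod_cast congrArg (Nat.cast : ℕ → ℝ) h
    rw [eq_div_iff (by positivity)]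
    exact h2
  push_cast
  rw [Finset.prod_congr rfl (fun i _ => hCi i), Finset.prod_const, Finset.card_univ,
    Fintype.card_fin]
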